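/- Suppose a random variable sequence $n^{-1}N_n^>$ (with $0 \le N_n^> \le n$) converges in distribution to some probability law $Q$ on $[0,1]$, and suppose the implication 'Spitzer's condition with parameter $\rho$ implies $n^{-1}N_n^> \xrightarrow{d} AS(\rho)$' holds. Then $Q = AS(\rho)$ with $\rho = \int_0^1 x\, Q(dx)$. In particular, $n^{-1}N_n^>$ either converges in distribution to a generalized arcsine law or does not converge in distribution at all. -/

import Mathlib

open MeasureTheory Filter Set ProbabilityTheory
open scoped ENNReal NNReal Classical Topology

noncomputable section

/-- Partial sums `S_n = X_1 + ⋯ + X_n` (with `S_0 = 0`). -/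
def partialSum {Ω : Type*} (X : ℕ → Ω → ℝ) (n : ℕ) (ω : Ω) : ℝ :=
  ∑ k ∈ Finset.Icc 1 n, X k ω

/-- The generalized arcsine law `AS(ρ)`: `δ₀` for `ρ ≤ 0`, `δ₁` for `ρ ≥ 1`, and otherwise the
distribution on `(0,1)` with density `(sin (π ρ) / π) x^(ρ-1) (1-x)^(-ρ)`. -/
def arcsineLaw (ρ : ℝ) : Measure ℝ :=
  if ρ ≤ 0 then Measure.dirac 0
  else if 1 ≤ ρ then Measure.dirac 1
  else volume.withDensity fun x =>
    ENNReal.ofReal ((Set.Ioo (0:ℝ) 1).indicator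
      (fun x => (Real.sin (Real.pi * ρ) / Real.pi) * x ^ (ρ - 1) * (1 - x) ^ (-ρ)) x)

/-- Convergence in distribution of real random variables to a law `ν`. -/
def TendstoInDistribution {Ω : Type*} [MeasurableSpace Ω] (μ : Measure Ω)
    (W : ℕ → Ω → ℝ) (ν : Measure ℝ) : Prop :=
  ∀ f : BoundedContinuousFunction ℝ ℝ,
    Tendsto (fun n => ∫ ω, f (W n ω) ∂μ) atTop (𝓝 (∫ x, f x ∂ν))

/-- Convergence to `0` in probability. -/
def TendstoInProbability {Ω : Type*} [MeasurableSpace Ω] (μ : Measure Ω)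
    (W : ℕ → Ω → ℝ) : Prop :=
  ∀ ε > (0:ℝ), Tendsto (fun n => μ {ω | ε ≤ |W n ω|}) atTop (𝓝 0)

/-- A Markov random walk with positive recurrent driving chain on a countable state space `S`:
driving chain `M`, increments `X`, laws `Pr i := ℙ(· | M₀ = i)`, increment kernel `K`,
transition matrix `P`, stationary distribution `π`, recurrence and positive recurrence. -/
structure MRW (Ω : Type*) [MeasurableSpace Ω] (S : Type*) [MeasurableSpace S]
    [MeasurableSingletonClass S] [Countable S] where
  M : ℕ → Ω → S
  X : ℕ → Ω → ℝ
  Pr : S → Measure Ω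
  prProb : ∀ i, IsProbabilityMeasure (Pr i)
  measM : ∀ n, Measurable (M n)
  measX : ∀ n, Measurable (X n)
  K : S → S → Measure ℝ
  kProb : ∀ i j, IsProbabilityMeasure (K i j)
  P : S → S → ℝ≥0∞
  init : ∀ i, Pr i {ω | M 0 ω = i} = 1
  markov : ∀ i (n : ℕ) (path : ℕ → S),
    Pr i {ω | ∀ k ≤ n + 1, M k ω = path k}
      = Pr i {ω | ∀ k ≤ n, M k ω = path k} * P (path n) (path (n + 1))
  condLaw : ∀ i (n : ℕ) (path : ℕ → S) (A : ℕ → Set ℝ), (∀ k, MeasurableSet (A k)) →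
    Pr i {ω | (∀ k ≤ n, M k ω = path k) ∧ ∀ k ∈ Finset.Icc 1 n, X k ω ∈ A k}
      = Pr i {ω | ∀ k ≤ n, M k ω = path k} * ∏ k ∈ Finset.Icc 1 n, K (path (k - 1)) (path k) (A k)
  π : S → ℝ≥0∞
  πPos : ∀ i, 0 < π i
  πSum : ∑' i, π i = 1
  πStat : ∀ j, ∑' i, π i * P i j = π j
  recurrent : ∀ i j, Pr j {ω | ∃ n, 1 ≤ n ∧ M n ω = i} = 1
  posRec : ∀ i, ∫⁻ ω, ((sInf {n | 1 ≤ n ∧ M n ω = i} : ℕ) : ℝ≥0∞) ∂Pr i < ∞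

variable {Ω : Type*} [MeasurableSpace Ω] {S : Type*} [MeasurableSpace S]
  [MeasurableSingletonClass S] [Countable S]

/-- `retTime M i ω n` is the `n`-th return time `τ_n(i)` of the driving chain to state `i`
(with `τ_0(i) = 0`; by convention `sInf ∅ = 0` for a never-returning path). -/
def retTime (M : ℕ → Ω → S) (i : S) (ω : Ω) : ℕ → ℕ
  | 0 => 0
  | k + 1 => sInf {n | retTime M i ω k < n ∧ M n ω = i}

/-- An MRW is null-homologous if `X_n = g(M_n) - g(M_{n-1})` a.s. for some `g`;
it is nontrivial otherwise. -/
def MRW.IsNontrivial (W : MRW Ω S) : Prop :=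
  ¬ ∃ g : S → ℝ, ∀ i, W.Pr i {ω | ∀ n, W.X (n + 1) ω = g (W.M (n + 1) ω) - g (W.M n ω)} = 1

/-- `D_k^i`: the maximal negative excursion below `S_{τ_{k-1}(i)}` during the `k`-th cycle. -/
def excD (M : ℕ → Ω → S) (X : ℕ → Ω → ℝ) (i : S) (k : ℕ) (ω : Ω) : ℝ :=
  ⨆ l ∈ Set.Ioc (retTime M i ω (k - 1)) (retTime M i ω k),
    max (-(partialSum X l ω - partialSum X (retTime M i ω (k - 1)) ω)) 0

/-- `H_k^i`: the maximal positive excursion above `S_{τ_{k-1}(i)}` during the `k`-th cycle. -/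
def excH (M : ℕ → Ω → S) (X : ℕ → Ω → ℝ) (i : S) (k : ℕ) (ω : Ω) : ℝ :=
  ⨆ l ∈ Set.Ioc (retTime M i ω (k - 1)) (retTime M i ω k),
    max (partialSum X l ω - partialSum X (retTime M i ω (k - 1)) ω) 0

/-- `N_n^>(x)`: the number of indices `1 ≤ k ≤ n` with `S_k > x`, as a real number. -/
def countPos {Ω : Type*} (X : ℕ → Ω → ℝ) (x : ℝ) (n : ℕ) (ω : Ω) : ℝ :=
  ∑ k ∈ Finset.Icc 1 n, if x < partialSum X k ω then (1:ℝ) else 0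

/-- `N_n^≤(x)`: the number of indices `1 ≤ k ≤ n` with `S_k ≤ x`, as a real number. -/
def countLe {Ω : Type*} (X : ℕ → Ω → ℝ) (x : ℝ) (n : ℕ) (ω : Ω) : ℝ :=
  ∑ k ∈ Finset.Icc 1 n, if partialSum X k ω ≤ x then (1:ℝ) else 0

/-- Strictly ascending ladder epochs of a sequence `T` (with `T 0 = 0` intended): the value `0`
for an epoch `σ(k)`, `k ≥ 1`, encodes `σ(k) = ∞` (defective case, `sInf ∅ = 0`). -/
def ladderEpoch (T : ℕ → ℝ) : ℕ → ℕ
  | 0 => 0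
  | 1 => sInf {m | 0 < m ∧ 0 < T m}
  | k + 2 =>
      if ladderEpoch T (k + 1) = 0 then 0
      else sInf {m | ladderEpoch T (k + 1) < m ∧ T (ladderEpoch T (k + 1)) < T m}


/-!
Since `N_n^>/n` takes values in `[0,1]`, testing the convergence in distribution against the
identity clamped to `[0,1]` (a bounded continuous function) shows that the mean
`n⁻¹ 𝔼 N_n^>` converges to `ρ = ∫ x dQ`, which is Spitzer's condition. Hence `N_n^>/n` also
converges in distribution to `AS(ρ)`, and limits in distribution are unique.
-/

open BoundedContinuousFunction

def unitClamp : ℝ →ᵇ ℝ :=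
  ofNormedAddCommGroup (fun x => (projIcc (0:ℝ) 1 zero_le_one x : ℝ))
    (continuous_subtype_val.comp continuous_projIcc) 1 fun x => by
      have hx := (projIcc (0:ℝ) 1 zero_le_one x).2
      rw [Real.norm_eq_abs, abs_le]
      exact ⟨by linarith [hx.1], hx.2⟩

lemma unitClamp_of_mem {x : ℝ} (hx : x ∈ Icc (0:ℝ) 1) : unitClamp x = x := by
  simp [unitClamp, projIcc_of_mem zero_le_one hx]

lemma div_natCast_mem_Icc {x : ℝ} {n : ℕ} (hx : x ∈ Icc (0:ℝ) n) : x / n ∈ Icc (0:ℝ) 1 := by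
  rcases Nat.eq_zero_or_pos n with rfl | hn
  · simp
  · have hn : (0:ℝ) < n := Nat.cast_pos.2 hn
    exact ⟨div_nonneg hx.1 hn.le, (div_le_one hn).2 hx.2⟩

lemma integral_id_mem_Icc {ν : Measure ℝ} [IsProbabilityMeasure ν]
    (hν : ∀ᵐ x ∂ν, x ∈ Icc (0:ℝ) 1) : ∫ x, x ∂ν ∈ Icc (0:ℝ) 1 :=
  (convex_Icc 0 1).integral_mem isClosed_Icc hν (.of_mem_Icc 0 1 aemeasurable_id hν)

namespace TendstoInDistribution

variable {Ω : Type*} [MeasurableSpace Ω] {μ : Measure Ω} {W : ℕ → Ω → ℝ}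

lemma tendsto_integral_of_mem_Icc {ν : Measure ℝ} (h : TendstoInDistribution μ W ν)
    (hW : ∀ n ω, W n ω ∈ Icc (0:ℝ) 1) (hν : ∀ᵐ x ∂ν, x ∈ Icc (0:ℝ) 1) :
    Tendsto (fun n => ∫ ω, W n ω ∂μ) atTop (𝓝 (∫ x, x ∂ν)) := by
  have hW_clamp : ∀ n, ∫ ω, unitClamp (W n ω) ∂μ = ∫ ω, W n ω ∂μ := fun n =>
    integral_congr_ae (.of_forall fun ω => unitClamp_of_mem (hW n ω))
  have hν_clamp : ∫ x, unitClamp x ∂ν = ∫ x, x ∂ν :=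
    integral_congr_ae (hν.mono fun x hx => unitClamp_of_mem hx)
  simpa only [hW_clamp, hν_clamp] using h unitClamp

lemma measure_eq {ν₁ ν₂ : Measure ℝ} [IsProbabilityMeasure ν₁]
    (h₁ : TendstoInDistribution μ W ν₁) (h₂ : TendstoInDistribution μ W ν₂) : ν₁ = ν₂ := by
  have h_integral : ∀ f : ℝ →ᵇ ℝ, ∫ x, f x ∂ν₁ = ∫ x, f x ∂ν₂ :=
    fun f => tendsto_nhds_unique (h₁ f) (h₂ f)
  have : IsProbabilityMeasure ν₂ := by
    have h_one := h_integral (const ℝ 1)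
    simp only [const_apply, integral_const, smul_eq_mul, mul_one, probReal_univ] at h_one
    refine ⟨(ENNReal.toReal_eq_one_iff _).1 ?_⟩
    rw [← measureReal_def, ← h_one]
  exact ext_of_forall_integral_eq_of_IsFiniteMeasure h_integral

end TendstoInDistribution

theorem arcsine_only_possible_limit_general
    {Ω : Type*} [MeasurableSpace Ω] (μ : Measure Ω)
    (N : ℕ → Ω → ℝ)
    (hbd : ∀ (n : ℕ) ω, N n ω ∈ Set.Icc (0:ℝ) (n : ℝ))
    (Q : Measure ℝ) [IsProbabilityMeasure Q] (hQ : Q (Set.Icc (0:ℝ) 1)ᶜ = 0)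
    (himp : ∀ ρ ∈ Set.Icc (0:ℝ) 1,
      Tendsto (fun n => (∫ ω, N n ω ∂μ) / n) atTop (𝓝 ρ) →
        TendstoInDistribution μ (fun n ω => N n ω / n) (arcsineLaw ρ))
    (hconv : TendstoInDistribution μ (fun n ω => N n ω / n) Q) :
    Q = arcsineLaw (∫ x, x ∂Q) := by
  have hQ_Icc : ∀ᵐ x ∂Q, x ∈ Icc (0:ℝ) 1 := ae_iff.2 hQ
  have hmean : Tendsto (fun n => (∫ ω, N n ω ∂μ) / n) atTop (𝓝 (∫ x, x ∂Q)) := by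
    simpa only [integral_div] using
      hconv.tendsto_integral_of_mem_Icc (fun n ω => div_natCast_mem_Icc (hbd n ω)) hQ_Icc
  exact hconv.measure_eq (himp _ (integral_id_mem_Icc hQ_Icc) hmean)

/-- Remark: if `N_n^>/n` (with `0 ≤ N_n^> ≤ n`) converges in distribution to some law `Q` on
`[0,1]`, and Spitzer's condition with parameter `ρ` implies `N_n^>/n →ᵈ AS(ρ)`, then necessarily
`Q = AS(ρ)` with `ρ = ∫ x dQ(x)`; i.e. the only possible distributional limits of `N_n^>/n` are
generalized arcsine laws. -/
theorem arcsine_only_possible_limit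
    {Ω : Type*} [MeasurableSpace Ω] (μ : Measure Ω) [IsProbabilityMeasure μ]
    (N : ℕ → Ω → ℝ) (hmeas : ∀ n, Measurable (N n))
    (hbd : ∀ (n : ℕ) ω, N n ω ∈ Set.Icc (0:ℝ) (n : ℝ))
    (Q : Measure ℝ) [IsProbabilityMeasure Q] (hQ : Q (Set.Icc (0:ℝ) 1)ᶜ = 0)
    (himp : ∀ ρ ∈ Set.Icc (0:ℝ) 1,
      Tendsto (fun n => (∫ ω, N n ω ∂μ) / n) atTop (𝓝 ρ) →
        TendstoInDistribution μ (fun n ω => N n ω / n) (arcsineLaw ρ))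
    (hconv : TendstoInDistribution μ (fun n ω => N n ω / n) Q) :
    Q = arcsineLaw (∫ x, x ∂Q) :=
  arcsine_only_possible_limit_general μ N hbd Q hQ himp hconv
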